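/- arXiv:1808.06390 — 3 statements merged into one kernel-verified Lean document; each statement's English description precedes it below -/
import Mathlib

section
/- Aronszajn's theorem: there exists an ℵ₁-tree with no cofinal branch; i.e., the tree property fails at ℵ₁ (in ZFC). -/
open Cardinal

/-- The level (height) of a node of a tree: the order type of its set of predecessors. -/
noncomputable def lvl {α : Type} [PartialOrder α]
    [inst : ∀ t : α, IsWellOrder {s : α // s < t} (· < ·)] (t : α) : Ordinal :=
  Ordinal.type ((· < ·) : {s : α // s < t} → {s : α // s < t} → Prop)

open Ordinal Set

noncomputable section
attribute [local instance] Classical.propDecidable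

abbrev WW : Type := ((aleph 1).ord).ToType

instance : IsWellOrder WW ((· < ·) : WW → WW → Prop) := isWellOrder_lt

def SSeq (b : WW) : Type := {f : {x : WW // x < b} → ℚ // StrictMono f}

def resq {b : WW} (t : SSeq b) (c : WW) (h : c ≤ b) : SSeq c :=
  ⟨fun x => t.1 ⟨x.1, lt_of_lt_of_le x.2 h⟩, fun x y hxy => t.2 hxy⟩

theorem resq_self {b : WW} (t : SSeq b) (h : b ≤ b) : resq t b h = t := rfl

theorem resq_resq {b c d : WW} (t : SSeq b) (h : c ≤ b) (h' : d ≤ c) :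
    resq (resq t c h) d h' = resq t d (h'.trans h) := rfl

def Bdq {c : WW} (s : SSeq c) (q : ℚ) : Prop := ∃ r, r < q ∧ ∀ x, s.1 x ≤ r

/-- "good extension" of `s` to level `b`. -/
def GoodExt {b : WW} (TT' : ∀ c, c < b → Set (SSeq c)) (c : WW) (hc : c < b)
    (s : SSeq c) (q : ℚ) (t : SSeq b) : Prop :=
  resq t c hc.le = s ∧ Bdq t q ∧ ∀ c' (h' : c' < b), resq t c' h'.le ∈ TT' c' h'

def pickO {b : WW} (TT' : ∀ c, c < b → Set (SSeq c)) (c : WW) (hc : c < b)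
    (s : SSeq c) (q : ℚ) : Option (SSeq b) :=
  if h : ∃ t, GoodExt TT' c hc s q t then some h.choose else none

def TTbody (b : WW) (TT' : ∀ c, c < b → Set (SSeq c)) : Set (SSeq b) :=
  if _ : ∃ c, c < b then
    {t | ∃ (c : WW) (hc : c < b) (s : SSeq c), s ∈ TT' c hc ∧
      ∃ (q : ℚ), Bdq s q ∧ pickO TT' c hc s q = some t}
  else Set.univ

def TT : ∀ b : WW, Set (SSeq b) := (wellFounded_lt (α := WW)).fix TTbody

theorem TT_eq (b : WW) : TT b = TTbody b (fun c _ => TT c) :=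
  WellFounded.fix_eq _ _ _

theorem countIio (b : WW) : Countable {x : WW // x < b} := by
  have h1 : #{x : WW // x < b} = (typein (α := WW) (· < ·) b).card :=
    (Ordinal.card_typein b).symm
  have h2 : (typein (α := WW) (· < ·) b : Ordinal) < (aleph 1).ord := by
    have := typein_lt_type (α := WW) (· < ·) b
    rwa [type_toType] at this
  have h3 : #{x : WW // x < b} < aleph 1 := by
    rw [h1]; exact Cardinal.lt_ord.1 h2
  have h4 : (Set.Countable {x : WW | x < b}) :=
    (countable_iff_lt_aleph_one _).2 h3
  exact h4.to_subtype

def appendq {m b : WW} (hmb : m < b) (hm : ∀ x, x < b → x ≤ m) (s : SSeq m) (v : ℚ)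
    (hv : ∀ x, s.1 x < v) : SSeq b :=
  ⟨fun x => if h : x.1 < m then s.1 ⟨x.1, h⟩ else v, by
    intro x y hxy
    have hxy' : x.1 < y.1 := hxy
    by_cases hx : x.1 < m <;> by_cases hy : y.1 < m
    · simpa [hx, hy] using s.2 (show (⟨x.1, hx⟩ : {z : WW // z < m}) < ⟨y.1, hy⟩ from hxy')
    · simpa [hx, hy] using hv _
    · exact absurd (hxy'.trans hy) (by simpa using (not_lt.1 hx))
    · have hx' : x.1 = m := le_antisymm (hm _ x.2) (not_lt.1 hx)
      have hy' : y.1 = m := le_antisymm (hm _ y.2) (not_lt.1 hy)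
      rw [hx', hy'] at hxy'
      exact absurd hxy' (lt_irrefl m)⟩

theorem appendq_res {m b : WW} (hmb : m < b) (hm : ∀ x, x < b → x ≤ m) (s : SSeq m) (v : ℚ)
    (hv : ∀ x, s.1 x < v) : resq (appendq hmb hm s v hv) m hmb.le = s :=
  Subtype.ext (funext fun x => dif_pos x.2)

def ClosedP (b : WW) : Prop := ∀ t ∈ TT b, ∀ c (h : c < b), resq t c h.le ∈ TT c

def ExtP (b : WW) : Prop := ∀ c (hc : c < b) (s : SSeq c), s ∈ TT c → ∀ q : ℚ, Bdq s q →
  ∃ t ∈ TT b, resq t c hc.le = s ∧ Bdq t q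

theorem existsGoodExt (b : WW) (IH : ∀ c, c < b → ClosedP c ∧ ExtP c)
    (c : WW) (hc : c < b) (s : SSeq c) (hs : s ∈ TT c) (q : ℚ) (hq : Bdq s q) :
    ∃ t : SSeq b, GoodExt (fun c' _ => TT c') c hc s q t := by
  obtain ⟨r, hrq, hsr⟩ := hq
  by_cases hmax : ∃ m, m < b ∧ ∀ x, x < b → x ≤ m
  · -- successor case
    obtain ⟨m, hmb, hm⟩ := hmax
    set q1 : ℚ := (r + q) / 2 with hq1def
    have hrq1 : r < q1 := by rw [hq1def]; linarith
    have hq1q : q1 < q := by rw [hq1def]; linarith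
    have hcm : c ≤ m := hm c hc
    obtain ⟨s', hs'mem, hs'res, r1, hr1q1, hs'bd⟩ :
        ∃ s' ∈ TT m, resq s' c hcm = s ∧ ∃ r1, r1 < q1 ∧ ∀ x, s'.1 x ≤ r1 := by
      rcases eq_or_lt_of_le hcm with h | h
      · subst h
        exact ⟨s, hs, resq_self s hcm, r, hrq1, hsr⟩
      · obtain ⟨t, ht, hres, r1, h1, h2⟩ := (IH m hmb).2 c h s hs q1 ⟨r, hrq1, hsr⟩
        exact ⟨t, ht, hres, r1, h1, h2⟩
    have hv : ∀ x, s'.1 x < q1 := fun x => lt_of_le_of_lt (hs'bd x) hr1q1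
    refine ⟨appendq hmb hm s' q1 hv, ?_, ⟨q1, hq1q, ?_⟩, ?_⟩
    · have h1 := resq_resq (appendq hmb hm s' q1 hv) hmb.le hcm
      rw [appendq_res] at h1
      rw [← hs'res, ← h1]
    · intro x
      by_cases hx : x.1 < m
      · show (if h : x.1 < m then s'.1 ⟨x.1, h⟩ else q1) ≤ q1
        rw [dif_pos hx]; exact (hs'bd _).trans hr1q1.le
      · show (if h : x.1 < m then s'.1 ⟨x.1, h⟩ else q1) ≤ q1
        rw [dif_neg hx]
    · intro c' h'
      rcases eq_or_lt_of_le (hm c' h') with h | h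
      · subst h
        rw [appendq_res]
        exact hs'mem
      · have h1 := resq_resq (appendq hmb hm s' q1 hv) hmb.le h.le
        rw [appendq_res] at h1
        rw [← h1]
        exact (IH m hmb).1 s' hs'mem c' h
  · -- limit case
    have hexU : ∀ z : {x : WW // x < b}, ∃ w : {x : WW // x < b}, z < w := by
      intro z
      by_contra h
      push_neg at h
      exact hmax ⟨z.1, z.2, fun x hx => h ⟨x, hx⟩⟩
    have : Nonempty {x : WW // x < b} := ⟨⟨c, hc⟩⟩
    have : Countable {x : WW // x < b} := countIio b
    obtain ⟨a, ha⟩ := exists_surjective_nat {x : WW // x < b}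
    set csq : ℕ → {x : WW // x < b} :=
      fun n => Nat.rec ⟨c, hc⟩ (fun k z => (hexU (max z (a k))).choose) n with hcsq
    have hcsqs : ∀ n, max (csq n) (a n) < csq (n + 1) := fun n => (hexU _).choose_spec
    have hmono : StrictMono csq :=
      strictMono_nat_of_lt_succ fun n => lt_of_le_of_lt (le_max_left _ _) (hcsqs n)
    have hcof : ∀ x : {x : WW // x < b}, ∃ n, x < csq n := by
      intro x
      obtain ⟨k, rfl⟩ := ha x
      exact ⟨k + 1, lt_of_le_of_lt (le_max_right _ _) (hcsqs k)⟩
    set q' : ℚ := (r + q) / 2 with hq'def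
    have hrq' : r < q' := by rw [hq'def]; linarith
    have hq'q : q' < q := by rw [hq'def]; linarith
    -- the recursive sequence of extensions
    let D : ℕ → Type := fun n =>
      {u : SSeq (csq n).1 // u ∈ TT (csq n).1 ∧ ∃ r1, r1 < q' ∧ ∀ x, u.1 x ≤ r1}
    have hlt : ∀ n, (csq n).1 < (csq (n + 1)).1 := fun n => hmono (Nat.lt_succ_self n)
    let step : ∀ n (u : D n),
        {v : D (n + 1) // resq v.1 (csq n).1 (hlt n).le = u.1} := fun n u => by
      have hex : ∃ t ∈ TT (csq (n + 1)).1,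
          resq t (csq n).1 (hlt n).le = u.1 ∧ Bdq t q' :=
        (IH _ (csq (n + 1)).2).2 _ (hlt n) u.1 u.2.1 q' u.2.2
      exact ⟨⟨hex.choose, hex.choose_spec.1, hex.choose_spec.2.2⟩, hex.choose_spec.2.1⟩
    let U : ∀ n, D n := fun n => Nat.rec ⟨s, hs, r, hrq', hsr⟩ (fun k u => (step k u).1) n
    have hcoh1 : ∀ n, resq (U (n + 1)).1 (csq n).1 (hlt n).le = (U n).1 :=
      fun n => (step n (U n)).2
    have hmle : ∀ {n m : ℕ}, n ≤ m → (csq n).1 ≤ (csq m).1 :=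
      fun h => Subtype.coe_le_coe.2 (hmono.monotone h)
    have hcoh : ∀ n m (h : n ≤ m), resq (U m).1 (csq n).1 (hmle h) = (U n).1 := by
      intro n m h
      induction m, h using Nat.le_induction with
      | base => exact resq_self _ _
      | succ m hm ihm =>
        have h2 := resq_resq (U (m + 1)).1 (hlt m).le (hmle hm)
        rw [hcoh1 m] at h2
        rw [← ihm, ← h2]
    -- the union
    have hltv : ∀ x : {x : WW // x < b}, x.1 < ((csq (hcof x).choose) : {x : WW // x < b}).1 :=
      fun x => (hcof x).choose_spec
    set t0 : {x : WW // x < b} → ℚ :=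
      fun x => (U (hcof x).choose).1.1 ⟨x.1, hltv x⟩ with ht0
    have key : ∀ (x : {x : WW // x < b}) k l (hkl : k ≤ l) (hk : x.1 < (csq k).1)
        (hl : x.1 < (csq l).1), (U l).1.1 ⟨x.1, hl⟩ = (U k).1.1 ⟨x.1, hk⟩ := by
      intro x k l hkl hk hl
      conv_rhs => rw [← hcoh k l hkl]
      rfl
    have hval : ∀ (x : {x : WW // x < b}) n (hn : x.1 < (csq n).1),
        t0 x = (U n).1.1 ⟨x.1, hn⟩ := by
      intro x n hn
      rcases le_total (hcof x).choose n with h | h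
      · exact (key x _ n h (hltv x) hn).symm
      · exact key x n _ h hn (hltv x)
    have htmono : StrictMono t0 := by
      intro x y hxy
      obtain ⟨n, hn⟩ := hcof y
      have hn' : y.1 < (csq n).1 := hn
      have hx' : x.1 < (csq n).1 := lt_trans hxy hn'
      rw [hval x n hx', hval y n hn']
      exact (U n).1.2 (show (⟨x.1, hx'⟩ : {z : WW // z < (csq n).1}) < ⟨y.1, hn'⟩ from hxy)
    refine ⟨⟨t0, htmono⟩, ?_, ⟨q', hq'q, ?_⟩, ?_⟩
    · apply Subtype.ext
      funext x
      have hx0 : x.1 < (csq 0).1 := x.2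
      exact hval ⟨x.1, lt_of_lt_of_le x.2 hc.le⟩ 0 hx0
    · intro x
      obtain ⟨r1, h1, h2⟩ := (U (hcof x).choose).2.2
      exact le_trans (h2 _) h1.le
    · intro c' h'
      obtain ⟨n, hn⟩ := hcof ⟨c', h'⟩
      have hn' : c' < (csq n).1 := hn
      have heq : resq ⟨t0, htmono⟩ c' h'.le = resq (U n).1 c' hn'.le := by
        apply Subtype.ext
        funext x
        exact hval ⟨x.1, lt_of_lt_of_le x.2 h'.le⟩ n (lt_trans x.2 hn')
      rw [heq]
      exact (IH _ (csq n).2).1 (U n).1 (U n).2.1 c' hn'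

theorem TT_main : ∀ b : WW, ClosedP b ∧ ExtP b ∧ (TT b).Countable ∧ (TT b).Nonempty := by
  intro b
  induction b using WellFoundedLT.induction with
  | _ b IH =>
  have IH' : ∀ c, c < b → ClosedP c ∧ ExtP c := fun c hc => ⟨(IH c hc).1, (IH c hc).2.1⟩
  by_cases hb : ∃ c, c < b
  · have hTTb : TT b = {t | ∃ (c : WW) (hc : c < b) (s : SSeq c), s ∈ TT c ∧
        ∃ (q : ℚ), Bdq s q ∧ pickO (fun c' _ => TT c') c hc s q = some t} := by
      rw [TT_eq, TTbody, dif_pos hb]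
    have hGood : ∀ t ∈ TT b, ∃ (c : WW) (hc : c < b) (s : SSeq c) (q : ℚ),
        GoodExt (fun c' _ => TT c') c hc s q t := by
      intro t ht
      rw [hTTb] at ht
      obtain ⟨c, hc, s, hs, q, hq, hpick⟩ := ht
      unfold pickO at hpick
      split at hpick
      · next h =>
        refine ⟨c, hc, s, q, ?_⟩
        have := h.choose_spec
        rwa [Option.some_inj.1 hpick] at this
      · exact absurd hpick (by simp)
    have hclosed : ClosedP b := by
      intro t ht c' h'
      obtain ⟨c, hc, s, q, hg⟩ := hGood t ht
      exact hg.2.2 c' h'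
    have hext : ExtP b := by
      intro c hc s hs q hq
      have hex : ∃ t, GoodExt (fun c' _ => TT c') c hc s q t :=
        existsGoodExt b IH' c hc s hs q hq
      refine ⟨hex.choose, ?_, hex.choose_spec.1, hex.choose_spec.2.1⟩
      rw [hTTb]
      exact ⟨c, hc, s, hs, q, hq, by rw [pickO, dif_pos hex]⟩
    have hcnt : (TT b).Countable := by
      have : Countable {c : WW // c < b} := countIio b
      have hTc : ∀ c : {c : WW // c < b}, Countable {s : SSeq c.1 // s ∈ TT c.1} :=
        fun c => ((IH c.1 c.2).2.2.1).to_subtype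
      set g : (Σ c : {c : WW // c < b}, ({s : SSeq c.1 // s ∈ TT c.1} × ℚ)) →
          Option (SSeq b) :=
        fun p => pickO (fun c' _ => TT c') p.1.1 p.1.2 p.2.1.1 p.2.2 with hg
    -- TT b ⊆ preimage of range g under some
      have hsub : TT b ⊆ Option.some ⁻¹' (Set.range g) := by
        intro t ht
        rw [hTTb] at ht
        obtain ⟨c, hc, s, hs, q, hq, hpick⟩ := ht
        exact ⟨⟨⟨c, hc⟩, ⟨s, hs⟩, q⟩, hpick⟩
      exact Set.Countable.mono hsub
        ((Set.countable_range g).preimage (Option.some_injective _))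
    have hne : (TT b).Nonempty := by
      obtain ⟨c0, hc0⟩ := hb
      have hm := (wellFounded_lt (α := WW)).min_mem Set.univ ⟨c0, trivial⟩
      set m := (wellFounded_lt (α := WW)).min Set.univ ⟨c0, trivial⟩ with hmdef
      have hleast : ∀ x : WW, ¬ x < m :=
        fun x hx => (wellFounded_lt (α := WW)).not_lt_min Set.univ (x := x) trivial hx
      have hmb : m < b := lt_of_le_of_lt (not_lt.1 (hleast c0)) hc0
      have hem : IsEmpty {x : WW // x < m} := ⟨fun x => hleast x.1 x.2⟩
      have hTm : TT m = Set.univ := by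
        rw [TT_eq, TTbody, dif_neg]
        push_neg
        exact fun c => not_lt.1 (hleast c)
      set s0 : SSeq m := ⟨fun x => hem.elim x, fun x => hem.elim x⟩ with hs0
      have hs0m : s0 ∈ TT m := by rw [hTm]; trivial
      obtain ⟨t, ht, -⟩ := hext m hmb s0 hs0m 0 ⟨-1, by norm_num, fun x => hem.elim x⟩
      exact ⟨t, ht⟩
    exact ⟨hclosed, hext, hcnt, hne⟩
  · push_neg at hb
    have hTTb : TT b = Set.univ := by
      rw [TT_eq, TTbody, dif_neg]
      push_neg
      exact hb
    have hem : IsEmpty {x : WW // x < b} := ⟨fun x => absurd x.2 (not_lt.2 (hb x.1))⟩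
    refine ⟨?_, ?_, ?_, ?_⟩
    · intro t ht c h
      exact absurd h (not_lt.2 (hb c))
    · intro c hc
      exact absurd hc (not_lt.2 (hb c))
    · have : Subsingleton (SSeq b) := ⟨fun u v => Subtype.ext (funext fun x => hem.elim x)⟩
      exact (Set.countable_coe_iff.1 inferInstance)
    · rw [hTTb]
      exact ⟨⟨fun x => hem.elim x, fun x => hem.elim x⟩, trivial⟩

theorem TT_closed (b : WW) : ∀ t ∈ TT b, ∀ c (h : c < b), resq t c h.le ∈ TT c :=
  (TT_main b).1

theorem TT_countable (b : WW) : (TT b).Countable := (TT_main b).2.2.1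

theorem TT_nonempty (b : WW) : (TT b).Nonempty := (TT_main b).2.2.2

def TreeA : Type := {p : Σ b : WW, SSeq b // p.2 ∈ TT p.1}

instance : PartialOrder TreeA where
  le p q := ∃ h : p.1.1 ≤ q.1.1, resq q.1.2 p.1.1 h = p.1.2
  le_refl p := ⟨le_rfl, resq_self _ _⟩
  le_trans p q u := by
    rintro ⟨h1, e1⟩ ⟨h2, e2⟩
    refine ⟨h1.trans h2, ?_⟩
    have := resq_resq u.1.2 h2 h1
    rw [e2] at this
    rw [← this, e1]
  le_antisymm p q := by
    rintro ⟨h1, e1⟩ ⟨h2, e2⟩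
    obtain ⟨⟨b1, f1⟩, hp⟩ := p
    obtain ⟨⟨b2, f2⟩, hq⟩ := q
    apply Subtype.ext
    simp only at h1 h2 e1 e2 ⊢
    have hb : b1 = b2 := le_antisymm h1 h2
    subst hb
    rw [resq_self] at e1
    rw [e1]

theorem TreeA_le_iff (p q : TreeA) :
    p ≤ q ↔ ∃ h : p.1.1 ≤ q.1.1, resq q.1.2 p.1.1 h = p.1.2 := Iff.rfl

theorem TreeA_lt_iff (p q : TreeA) :
    p < q ↔ ∃ h : p.1.1 < q.1.1, resq q.1.2 p.1.1 h.le = p.1.2 := by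
  constructor
  · intro hlt
    obtain ⟨h1, e1⟩ := (TreeA_le_iff p q).1 hlt.le
    rcases eq_or_lt_of_le h1 with h | h
    · exfalso
      apply hlt.ne
      obtain ⟨⟨b1, f1⟩, hp⟩ := p
      obtain ⟨⟨b2, f2⟩, hq⟩ := q
      simp only at h h1 e1
      subst h
      rw [resq_self] at e1
      apply Subtype.ext
      simp only
      exact Sigma.ext rfl (heq_of_eq e1.symm)
    · exact ⟨h, e1⟩
  · rintro ⟨h, e⟩
    apply lt_of_le_of_ne ((TreeA_le_iff p q).2 ⟨h.le, e⟩)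
    intro hpq
    rw [hpq] at h
    exact lt_irrefl _ h

/-- the predecessors of a node are order-isomorphic to `Iio` of its `WW`-level. -/
noncomputable def predIso (t : TreeA) :
    ((· < ·) : {s : TreeA // s < t} → {s : TreeA // s < t} → Prop) ≃r
      ((· < ·) : {x : WW // x < t.1.1} → {x : WW // x < t.1.1} → Prop) where
  toFun s := ⟨s.1.1.1, ((TreeA_lt_iff s.1 t).1 s.2).choose⟩
  invFun x := ⟨⟨⟨x.1, resq t.1.2 x.1 x.2.le⟩, TT_closed _ _ t.2 _ x.2⟩,
    (TreeA_lt_iff _ t).2 ⟨x.2, rfl⟩⟩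
  left_inv s := by
    apply Subtype.ext
    apply Subtype.ext
    obtain ⟨⟨⟨b1, f1⟩, hs⟩, hst⟩ := s
    have h := ((TreeA_lt_iff _ t).1 hst).choose_spec
    simp only at h ⊢
    exact Sigma.ext rfl (heq_of_eq h)
  right_inv x := Subtype.ext rfl
  map_rel_iff' {s u} := by
    constructor
    · intro h
      have : s.1.1.1 < u.1.1.1 := h
      show s.1 < u.1
      rw [TreeA_lt_iff]
      refine ⟨this, ?_⟩
      have hs := ((TreeA_lt_iff s.1 t).1 s.2).choose_spec
      have hu := ((TreeA_lt_iff u.1 t).1 u.2).choose_spec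
      rw [← hu, ← hs]
      exact resq_resq t.1.2 _ _
    · intro h
      have : s.1.1.1 < u.1.1.1 := ((TreeA_lt_iff s.1 u.1).1 h).choose
      exact this

instance TreeA_wo : ∀ t : TreeA, IsWellOrder {s : TreeA // s < t} (· < ·) := fun t =>
  (predIso t).toRelEmbedding.isWellOrder

theorem lvl_eq (t : TreeA) : lvl t = typein (α := WW) ((· < ·) : WW → WW → Prop) t.1.1 := by
  have h : Ordinal.type ((· < ·) : {s : TreeA // s < t} → {s : TreeA // s < t} → Prop) =
      Ordinal.type ((· < ·) : {x : WW // x < t.1.1} → {x : WW // x < t.1.1} → Prop) :=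
    Ordinal.type_eq.2 ⟨predIso t⟩
  rw [lvl, h]
  rfl

theorem lvl_lt (t : TreeA) : lvl t < (aleph 1).ord := by
  rw [lvl_eq]
  have := typein_lt_type ((· < ·) : WW → WW → Prop) t.1.1
  rwa [type_toType] at this

theorem countLevelFix (b : WW) : Countable {p : TreeA // p.1.1 = b} := by
  have h1 : Countable {s : SSeq b // s ∈ TT b} := (TT_countable b).to_subtype
  have e : {p : TreeA // p.1.1 = b} ≃ {s : SSeq b // s ∈ TT b} := {
    toFun := fun p => ⟨p.2 ▸ p.1.1.2, by
      obtain ⟨⟨⟨b1, f⟩, hf⟩, hp⟩ := p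
      simp only at hp
      subst hp
      exact hf⟩
    invFun := fun s => ⟨⟨⟨b, s.1⟩, s.2⟩, rfl⟩
    left_inv := fun p => by
      obtain ⟨⟨⟨b1, f⟩, hf⟩, hp⟩ := p
      simp only at hp
      subst hp
      rfl
    right_inv := fun s => rfl }
  exact Countable.of_equiv _ e.symm

theorem levels_surj : ∀ o : Ordinal, o < (aleph 1).ord → ∃ t : TreeA, lvl t = o := by
  intro o ho
  have ho' : o < Ordinal.type ((· < ·) : WW → WW → Prop) := by rwa [type_toType]
  obtain ⟨b, hb⟩ := typein_surj ((· < ·) : WW → WW → Prop) ho'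
  obtain ⟨s, hs⟩ := TT_nonempty b
  exact ⟨⟨⟨b, s⟩, hs⟩, by exact (lvl_eq _).trans hb⟩

theorem levels_countable : ∀ o : Ordinal, Cardinal.mk {t : TreeA // lvl t = o} ≤ aleph 0 := by
  intro o
  rw [aleph_zero]
  rw [Cardinal.mk_le_aleph0_iff]
  by_cases ho : o < (aleph 1).ord
  · have ho' : o < Ordinal.type ((· < ·) : WW → WW → Prop) := by rwa [type_toType]
    obtain ⟨b, hb⟩ := typein_surj ((· < ·) : WW → WW → Prop) ho'
    have hbl : ∀ t : {t : TreeA // lvl t = o}, t.1.1.1 = b := by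
      intro t
      apply typein_injective ((· < ·) : WW → WW → Prop)
      rw [← lvl_eq, t.2, hb]
    have : Countable {p : TreeA // p.1.1 = b} := countLevelFix b
    have hinj : Function.Injective
        (fun t : {t : TreeA // lvl t = o} => (⟨t.1, hbl t⟩ : {p : TreeA // p.1.1 = b})) := by
      intro t1 t2 h
      exact Subtype.ext (congrArg (fun (p : {p : TreeA // p.1.1 = b}) => p.1) h)
    exact hinj.countable
  · have : IsEmpty {t : TreeA // lvl t = o} :=
      ⟨fun t => ho (t.2 ▸ lvl_lt t.1)⟩
    infer_instance

theorem no_branch : ¬ ∃ B : Set TreeA, IsChain (· ≤ ·) B ∧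
    ∀ o : Ordinal, o < (aleph 1).ord → ∃ t ∈ B, lvl t = o := by
  rintro ⟨B, hchain, hB⟩
  have hagree : ∀ t1 t2, t1 ∈ B → t2 ∈ B → ∀ (x : WW) (hx1 : x < t1.1.1) (hx2 : x < t2.1.1),
      t1.1.2.1 ⟨x, hx1⟩ = t2.1.2.1 ⟨x, hx2⟩ := by
    have haux : ∀ t1 t2 : TreeA, t1 ≤ t2 → ∀ (x : WW) (hx1 : x < t1.1.1) (hx2 : x < t2.1.1),
        t1.1.2.1 ⟨x, hx1⟩ = t2.1.2.1 ⟨x, hx2⟩ := by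
      rintro t1 t2 ⟨hle, he⟩ x hx1 hx2
      rw [← he]
      rfl
    intro t1 t2 h1 h2 x hx1 hx2
    rcases eq_or_ne t1 t2 with h | h
    · subst h; rfl
    · rcases hchain h1 h2 h with h | h
      · exact haux t1 t2 h x hx1 hx2
      · exact (haux t2 t1 h x hx2 hx1).symm
  have hpick : ∀ x : WW, ∃ t ∈ B, lvl t = Order.succ (typein ((· < ·) : WW → WW → Prop) x) := by
    intro x
    apply hB
    have h1 : typein ((· < ·) : WW → WW → Prop) x < (aleph 1).ord := by
      have := typein_lt_type ((· < ·) : WW → WW → Prop) x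
      rwa [type_toType] at this
    exact (Cardinal.isSuccLimit_ord (aleph0_le_aleph 1)).succ_lt h1
  choose pk hpkB hpkl using hpick
  have hxlt : ∀ x : WW, x < (pk x).1.1 := by
    intro x
    have h1 : typein ((· < ·) : WW → WW → Prop) x <
        typein ((· < ·) : WW → WW → Prop) (pk x).1.1 := by
      rw [← lvl_eq, hpkl x]
      exact Order.lt_succ _
    exact (typein_lt_typein _).1 h1
  set g : WW → ℚ := fun x => (pk x).1.2.1 ⟨x, hxlt x⟩ with hg
  have hgmono : StrictMono g := by
    intro x y hxy
    have hxy' : x < (pk y).1.1 := lt_trans hxy (hxlt y)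
    have h1 : g x = (pk y).1.2.1 ⟨x, hxy'⟩ :=
      hagree _ _ (hpkB x) (hpkB y) x (hxlt x) hxy'
    calc g x = (pk y).1.2.1 ⟨x, hxy'⟩ := h1
    _ < (pk y).1.2.1 ⟨y, hxlt y⟩ :=
      (pk y).1.2.2 (show (⟨x, hxy'⟩ : {z : WW // z < (pk y).1.1}) < ⟨y, hxlt y⟩ from hxy)
    _ = g y := rfl
  have hcard : #WW ≤ #ℚ := Cardinal.mk_le_of_injective hgmono.injective
  rw [Cardinal.mk_denumerable ℚ] at hcard
  have hW : #WW = aleph 1 := by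
    rw [Cardinal.mk_toType, Cardinal.card_ord]
  rw [hW] at hcard
  exact absurd hcard (not_le.2 aleph0_lt_aleph_one)

end


/-- Aronszajn's theorem: there is an `ℵ₁`-tree (a tree of height `ω₁` all of whose levels
are countable) with no cofinal branch; i.e. the tree property fails at `ℵ₁`. -/
theorem stmt1 :
    ∃ (α : Type) (_ : PartialOrder α) (_ : ∀ t : α, IsWellOrder {s : α // s < t} (· < ·)),
      (∀ t : α, lvl t < (aleph 1).ord) ∧
      (∀ o : Ordinal, o < (aleph 1).ord → ∃ t : α, lvl t = o) ∧
      (∀ o : Ordinal, Cardinal.mk {t : α // lvl t = o} ≤ aleph 0) ∧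
      ¬ ∃ B : Set α, IsChain (· ≤ ·) B ∧
          ∀ o : Ordinal, o < (aleph 1).ord → ∃ t ∈ B, lvl t = o := by
  exact ⟨TreeA, inferInstance, TreeA_wo, lvl_lt, levels_surj, levels_countable, no_branch⟩
end

section
/- Generalized Röwbottom lemma for sequences of normal measures: Let κ be measurable, δ < κ, τ < κ, and let ⟨U_α : α < δ⟩ be normal κ-complete ultrafilters on κ. For every function f : [κ]^{<ω} → τ there exist sets A_α ∈ U_α (α < δ) such that for every finite sequence ⟨α₀,…,α_{n-1}⟩ of ordinals below δ, f is constant on the set of increasing sequences ⟨ν₀,…,ν_{n-1}⟩ with ν_i ∈ A_{α_i} for each i. -/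
/-!
Induction on the length `n`: for each first coordinate `ν`, the induction hypothesis gives sets
homogeneous for `f (ν, ·)` with some colour `s ν`; since fewer than `κ` colours are available, `s` is
constant on a set of the first measure, and normality lets the diagonal intersection over `ν` of the
remaining sets serve simultaneously for all `ν` below the current coordinate. Finally there are
fewer than `κ` finite sequences of measure indices, so `κ`-completeness combines the homogeneous
sets obtained for each of them.
-/

open Cardinal Set

/-- `U` is a `κ`-complete normal (nonprincipal) ultrafilter on the linearly ordered set `O`
(which represents the measurable cardinal `κ`). -/
def IsNormalMeasure (κ : Cardinal) {O : Type} [LinearOrder O] (U : Set (Set O)) : Prop :=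
  (univ : Set O) ∈ U ∧ (∅ : Set O) ∉ U ∧
  (∀ A B : Set O, A ∈ U → A ⊆ B → B ∈ U) ∧
  (∀ A : Set O, A ∈ U ∨ Aᶜ ∈ U) ∧
  (∀ (ι : Type) (_ : Cardinal.mk ι < κ) (A : ι → Set O), (∀ i, A i ∈ U) → (⋂ i, A i) ∈ U) ∧
  (∀ A : O → Set O, (∀ β, A β ∈ U) → {γ : O | ∀ β, β < γ → γ ∈ A β} ∈ U) ∧
  (∀ b : O, {x : O | b < x} ∈ U)

namespace IsNormalMeasure

variable {κ : Cardinal} {O : Type} [LinearOrder O] {U : Set (Set O)}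

theorem empty_notMem (hU : IsNormalMeasure κ U) : ∅ ∉ U := hU.2.1

theorem mem_or_compl_mem (hU : IsNormalMeasure κ U) (A : Set O) : A ∈ U ∨ Aᶜ ∈ U := hU.2.2.2.1 A

theorem iInter_mem (hU : IsNormalMeasure κ U) {ι : Type} (hι : #ι < κ) {A : ι → Set O}
    (hA : ∀ i, A i ∈ U) : ⋂ i, A i ∈ U :=
  hU.2.2.2.2.1 ι hι A hA

theorem diagInter_mem (hU : IsNormalMeasure κ U) {A : O → Set O} (hA : ∀ β, A β ∈ U) :
    {γ | ∀ β, β < γ → γ ∈ A β} ∈ U :=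
  hU.2.2.2.2.2.1 A hA

theorem exists_preimage_singleton_mem (hU : IsNormalMeasure κ U) {σ : Type} (hσ : #σ < κ)
    (g : O → σ) : ∃ s, g ⁻¹' {s} ∈ U := by
  by_contra! h
  have hcompl : ∀ s, (g ⁻¹' {s})ᶜ ∈ U := fun s => (hU.mem_or_compl_mem _).resolve_left (h s)
  have hempty : ⋂ s, (g ⁻¹' {s})ᶜ = ∅ := by
    ext ν
    simp
  exact hU.empty_notMem (hempty ▸ hU.iInter_mem hσ hcompl)

end IsNormalMeasure

theorem exists_mem_eq_const_of_strictMono {κ : Cardinal} {O σ : Type} [LinearOrder O]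
    (hσ : #σ < κ) :
    ∀ {n : ℕ} (U : Fin n → Set (Set O)), (∀ j, IsNormalMeasure κ (U j)) →
      ∀ g : (Fin n → O) → σ, ∃ B : Fin n → Set O, (∀ j, B j ∈ U j) ∧
        ∃ s, ∀ v : Fin n → O, StrictMono v → (∀ j, v j ∈ B j) → g v = s
  | 0, _, _, g => ⟨fun _ => univ, finZeroElim, g finZeroElim,
      fun v _ _ => congrArg g (funext finZeroElim)⟩
  | _ + 1, U, hU, g => by
    choose B hB s hs using fun ν : O =>
      exists_mem_eq_const_of_strictMono hσ (U ∘ Fin.succ) (fun j => hU j.succ)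
        (fun u => g (Fin.cons ν u))
    obtain ⟨t, ht⟩ := (hU 0).exists_preimage_singleton_mem hσ s
    refine ⟨Fin.cons (s ⁻¹' {t}) (fun j => {γ | ∀ β, β < γ → γ ∈ B β j}),
      Fin.cases ht (fun j => (hU j.succ).diagInter_mem (fun β => hB β j)), t, ?_⟩
    intro v hv hvB
    have htail : ∀ j, Fin.tail v j ∈ B (v 0) j := fun j =>
      hvB j.succ (v 0) (hv (Fin.succ_pos j))
    calc g v = g (Fin.cons (v 0) (Fin.tail v)) := by rw [Fin.cons_self_tail]
      _ = s (v 0) := hs (v 0) (Fin.tail v) (hv.comp Fin.strictMono_succ) htail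
      _ = t := hvB 0

theorem exists_mem_forall_subset {κ : Cardinal} {O ι P : Type} [LinearOrder O]
    {U : ι → Set (Set O)} (hU : ∀ i, IsNormalMeasure κ (U i)) (hP : #P < κ)
    (idx : P → ι) (B : P → Set O) (hB : ∀ p, B p ∈ U (idx p)) :
    ∃ A : ι → Set O, (∀ i, A i ∈ U i) ∧ ∀ p, A (idx p) ⊆ B p := by
  refine ⟨fun i => ⋂ p : {p // idx p = i}, B p, fun i => ?_, fun p => ?_⟩
  · exact (hU i).iInter_mem ((mk_subtype_le _).trans_lt hP) fun ⟨p, hp⟩ => hp ▸ hB p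
  · exact iInter_subset_of_subset ⟨p, rfl⟩ subset_rfl

theorem mk_sigma_tuple_index_lt {κ : Cardinal} {ι : Type} (hκ : ℵ₀ < κ) (hι : #ι < κ) :
    #(Σ p : Σ n, Fin n → ι, Fin p.1) < κ := by
  have hinj : Function.Injective fun q : Σ p : Σ n, Fin n → ι, Fin p.1 =>
      (List.equivSigmaTuple.symm q.1, (q.2 : ℕ)) := by
    rintro ⟨p, j⟩ ⟨q, k⟩ h
    obtain ⟨hpq, hjk⟩ := Prod.ext_iff.mp h
    obtain rfl := List.equivSigmaTuple.symm.injective hpq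
    exact congrArg (Sigma.mk p) (Fin.ext hjk)
  calc #(Σ p : Σ n, Fin n → ι, Fin p.1) ≤ #(List ι × ℕ) := mk_le_of_injective hinj
    _ = #(List ι) * ℵ₀ := by simp [mk_prod]
    _ < κ := mul_lt_of_lt hκ.le ((mk_list_le_max ι).trans_lt (max_lt hκ hι)) hκ

theorem stmt3_general {O : Type} [LinearOrder O] (κ : Cardinal)
    (hκ : Cardinal.aleph 0 < κ)
    {ι σ : Type} (hι : Cardinal.mk ι < κ) (hσ : Cardinal.mk σ < κ)
    (U : ι → Set (Set O)) (hU : ∀ i, IsNormalMeasure κ (U i))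
    (f : {n : ℕ} → (Fin n → O) → σ) :
    ∃ A : ι → Set O, (∀ i, A i ∈ U i) ∧
      ∀ (n : ℕ) (a : Fin n → ι) (v w : Fin n → O),
        StrictMono v → StrictMono w →
        (∀ i, v i ∈ A (a i)) → (∀ i, w i ∈ A (a i)) → f v = f w := by
  have hℵ₀ : ℵ₀ < κ := by rwa [aleph_zero] at hκ
  choose B hB s hs using fun p : Σ n, Fin n → ι =>
    exists_mem_eq_const_of_strictMono hσ (U ∘ p.2) (fun j => hU (p.2 j)) (@f p.1)
  obtain ⟨A, hA, hAB⟩ := exists_mem_forall_subset hU (mk_sigma_tuple_index_lt hℵ₀ hι)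
    (fun q => q.1.2 q.2) (fun q => B q.1 q.2) (fun q => hB q.1 q.2)
  refine ⟨A, hA, fun n a v w hv hw hvA hwA => ?_⟩
  rw [hs ⟨n, a⟩ v hv fun j => hAB ⟨⟨n, a⟩, j⟩ (hvA j),
    hs ⟨n, a⟩ w hw fun j => hAB ⟨⟨n, a⟩, j⟩ (hwA j)]

/-- Generalized Röwbottom lemma for sequences of normal measures: if `κ` is measurable
(carried by `O`), `δ, τ < κ` (represented by the index type `ι` and target type `σ`),
`⟨U_i : i ∈ ι⟩` are normal `κ`-complete ultrafilters on `κ` and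
`f : [κ]^{<ω} → σ`, then there are `A_i ∈ U_i` such that for every finite sequence
`a : Fin n → ι` the value of `f` is the same on all increasing `n`-tuples
`⟨ν₀,…,ν_{n-1}⟩` with `ν_i ∈ A_{a i}`. -/
theorem stmt3 {O : Type} [LinearOrder O] (κ : Cardinal) (hO : Cardinal.mk O = κ)
    (hκ : Cardinal.aleph 0 < κ)
    {ι σ : Type} (hι : Cardinal.mk ι < κ) (hσ : Cardinal.mk σ < κ)
    (U : ι → Set (Set O)) (hU : ∀ i, IsNormalMeasure κ (U i))
    (f : {n : ℕ} → (Fin n → O) → σ) :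
    ∃ A : ι → Set O, (∀ i, A i ∈ U i) ∧
      ∀ (n : ℕ) (a : Fin n → ι) (v w : Fin n → O),
        StrictMono v → StrictMono w →
        (∀ i, v i ∈ A (a i)) → (∀ i, w i ∈ A (a i)) → f v = f w :=
  stmt3_general κ hκ hι hσ U hU f
end

section
/- Unger's branch lemma: if κ is a regular cardinal, T is a κ-tree and P is a forcing such that P × P has the κ-chain condition, then forcing with P adds no new cofinal branch through T. -/
open Cardinal

section tree
variable {α : Type} [PartialOrder α] [inst : ∀ t : α, IsWellOrder {s : α // s < t} (· < ·)]

lemma lvl_lt_lvl {s t : α} (h : s < t) : lvl s < lvl t := by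
  have key : lvl s = Ordinal.typein ((· < ·) : {x : α // x < t} → {x : α // x < t} → Prop) ⟨s, h⟩ := by
    rw [← Ordinal.type_subrel]
    apply Ordinal.type_eq.2
    refine ⟨RelIso.mk (Equiv.mk
      (fun x => ⟨⟨x.1, x.2.trans h⟩, by simpa [Subtype.mk_lt_mk] using x.2⟩)
      (fun y => ⟨y.1.1, Subtype.coe_lt_coe.2 y.2⟩) (fun x => rfl) (fun y => rfl)) ?_⟩
    intro x y
    simp [Subrel, Subtype.mk_lt_mk]
  rw [key]
  exact Ordinal.typein_lt_type _ _

lemma preds_comp {w₁ w₂ u : α} (h₁ : w₁ < u) (h₂ : w₂ < u) : w₁ ≤ w₂ ∨ w₂ ≤ w₁ := by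
  rcases trichotomous_of ((· < ·) : {s : α // s < u} → {s : α // s < u} → Prop)
    ⟨w₁, h₁⟩ ⟨w₂, h₂⟩ with h | h | h
  · exact Or.inl (le_of_lt (Subtype.mk_lt_mk.1 h))
  · exact Or.inl (le_of_eq (congrArg Subtype.val h))
  · exact Or.inr (le_of_lt (Subtype.mk_lt_mk.1 h))

lemma eq_of_comp_lvl {s t : α} (h : s ≤ t ∨ t ≤ s) (hl : lvl s = lvl t) : s = t := by
  rcases h with h | h
  · rcases h.lt_or_eq with h | h
    · exact absurd hl (lvl_lt_lvl h).ne
    · exact h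
  · rcases h.lt_or_eq with h | h
    · exact absurd hl.symm (lvl_lt_lvl h).ne
    · exact h.symm

lemma lt_of_comp_lvl {s t : α} (h : s ≤ t ∨ t ≤ s) (hl : lvl s < lvl t) : s < t := by
  rcases h with h | h
  · exact h.lt_of_ne (fun e => by simp [e] at hl)
  · rcases h.lt_or_eq with h' | h'
    · exact absurd hl (lvl_lt_lvl h').asymm
    · exact absurd hl (by simp [h'])

end tree

/-- Unger's branch lemma: if `κ` is regular, `T` is a `κ`-tree (carried by `α`) and `P`
is a forcing whose square `P × P` has the `κ`-chain condition, then forcing with `P`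
adds no new cofinal branch through `T`: every `P`-name `B` for a cofinal branch of `T`
is, densely, forced to be contained in a ground-model cofinal branch. -/
theorem stmt11 {α : Type} [PartialOrder α]
    [w : ∀ t : α, IsWellOrder {s : α // s < t} (· < ·)]
    (κ : Cardinal) (hreg : κ.IsRegular)
    (hlt : ∀ t : α, lvl t < κ.ord)
    (hlevels : ∀ o : Ordinal, o < κ.ord → ∃ t : α, lvl t = o)
    (hsmall : ∀ o : Ordinal, Cardinal.mk {t : α // lvl t = o} < κ)
    {P : Type} [Preorder P]
    (hcc : ∀ A : Set (P × P),
      (∀ x ∈ A, ∀ y ∈ A, x ≠ y → ¬ ∃ z : P × P, z ≤ x ∧ z ≤ y) → Cardinal.mk A < κ)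
    (B : P → α → Prop)
    (hdown : ∀ p q : P, ∀ t : α, q ≤ p → B p t → B q t)
    (hchain : ∀ (p : P) (s t : α), B p s → B p t → s ≤ t ∨ t ≤ s)
    (hcof : ∀ (p : P) (o : Ordinal), o < κ.ord → ∃ q, q ≤ p ∧ ∃ t : α, lvl t = o ∧ B q t) :
    ∀ p : P, ∃ q, q ≤ p ∧ ∃ C : Set α, IsChain (· ≤ ·) C ∧
      (∀ o : Ordinal, o < κ.ord → ∃ t ∈ C, lvl t = o) ∧
      ∀ (r : P) (t : α), r ≤ q → B r t → t ∈ C := by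
  intro p
  by_contra hgoal
  have hlim : Order.IsSuccLimit (κ.ord) := Cardinal.isSuccLimit_ord hreg.aleph0_le
  -- every condition below p has a "split" below it
  have hsplit : ∀ q, q ≤ p → ∃ s t : α, (∃ r, r ≤ q ∧ B r s) ∧ (∃ r, r ≤ q ∧ B r t) ∧
      ¬ s ≤ t ∧ ¬ t ≤ s := by
    intro q hq
    by_contra hno
    push_neg at hno
    apply hgoal
    refine ⟨q, hq, {t | ∃ r, r ≤ q ∧ B r t}, ?_, ?_, ?_⟩
    · intro s hs t ht _
      by_cases hle : s ≤ t
      · exact Or.inl hle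
      · exact Or.inr (hno s t hs ht hle)
    · intro o ho
      obtain ⟨r, hr, t, hlv, hB⟩ := hcof q o ho
      exact ⟨t, ⟨r, hr, hB⟩, hlv⟩
    · intro r t hr hB
      exact ⟨r, hr, hB⟩
  -- a nonempty element of the data type
  obtain ⟨t0, -⟩ := hlevels 0 hlim.pos
  -- Lemma A: splits with prescribed common stem level
  have lemA : ∀ β : Ordinal, ∃ d : P × P × α × α × α, β < κ.ord →
      (d.1 ≤ p ∧ d.2.1 ≤ p ∧ B d.1 d.2.2.1 ∧ B d.2.1 d.2.2.2.1 ∧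
       lvl d.2.2.1 = lvl d.2.2.2.1 ∧ ¬ d.2.2.1 ≤ d.2.2.2.1 ∧ ¬ d.2.2.2.1 ≤ d.2.2.1 ∧
       d.2.2.2.2 < d.2.2.1 ∧ d.2.2.2.2 < d.2.2.2.1 ∧ lvl d.2.2.2.2 = β) := by
    intro β
    by_cases hβ : β < κ.ord
    swap
    · exact ⟨(p, p, t0, t0, t0), fun h => absurd h hβ⟩
    obtain ⟨r, hrp, w0, hw0, hBw⟩ := hcof p β hβ
    obtain ⟨s', t', ⟨r₁, hr₁, hBs'⟩, ⟨r₂, hr₂, hBt'⟩, hst, hts⟩ := hsplit r hrp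
    set M : Ordinal := max (max (lvl s') (lvl t')) β with hM
    have hγ : M + 1 < κ.ord := by
      rw [Ordinal.add_one_eq_succ]
      exact hlim.succ_lt (max_lt (max_lt (hlt s') (hlt t')) hβ)
    obtain ⟨a, hra, u, hu, hBu⟩ := hcof r₁ (M + 1) hγ
    obtain ⟨b, hrb, v, hv, hBv⟩ := hcof r₂ (M + 1) hγ
    have hMlt : M < M + 1 := by
      rw [Ordinal.add_one_eq_succ]; exact Order.lt_succ M
    have hBas : B a s' := hdown r₁ a s' hra hBs'
    have hBaw : B a w0 := hdown r a w0 (hra.trans hr₁) hBw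
    have hBbt : B b t' := hdown r₂ b t' hrb hBt'
    have hBbw : B b w0 := hdown r b w0 (hrb.trans hr₂) hBw
    have hsu : s' < u := lt_of_comp_lvl (hchain a s' u hBas hBu)
      (by rw [hu]; exact lt_of_le_of_lt ((le_max_left _ _).trans (le_max_left _ _)) hMlt)
    have hwu : w0 < u := lt_of_comp_lvl (hchain a w0 u hBaw hBu)
      (by rw [hu, hw0]; exact lt_of_le_of_lt (le_max_right _ _) hMlt)
    have htv : t' < v := lt_of_comp_lvl (hchain b t' v hBbt hBv)
      (by rw [hv]; exact lt_of_le_of_lt ((le_max_right _ _).trans (le_max_left _ _)) hMlt)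
    have hwv : w0 < v := lt_of_comp_lvl (hchain b w0 v hBbw hBv)
      (by rw [hv, hw0]; exact lt_of_le_of_lt (le_max_right _ _) hMlt)
    have huv : ¬ u ≤ v := by
      intro hle
      have he : u = v := eq_of_comp_lvl (Or.inl hle) (hu.trans hv.symm)
      subst he
      rcases preds_comp hsu htv with h | h
      · exact hst h
      · exact hts h
    have hvu : ¬ v ≤ u := by
      intro hle
      have he : u = v := eq_of_comp_lvl (Or.inr hle) (hu.trans hv.symm)
      subst he
      rcases preds_comp hsu htv with h | h
      · exact hst h
      · exact hts h
    exact ⟨(a, b, u, v, w0), fun _ =>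
      ⟨hra.trans (hr₁.trans hrp), hrb.trans (hr₂.trans hrp), hBu, hBv,
       hu.trans hv.symm, huv, hvu, hwu, hwv, hw0⟩⟩
  choose f hf using lemA
  -- transfinite recursion: at stage η the stem level dominates all earlier split levels
  obtain ⟨F, hFeq⟩ : ∃ F : Ordinal → P × P × α × α × α,
      ∀ η, F η = f (Ordinal.blsub η (fun ξ _ => lvl (F ξ).2.2.1)) :=
    ⟨Ordinal.lt_wf.fix (fun η ih => f (Ordinal.blsub η (fun ξ h => lvl (ih ξ h).2.2.1))),
     fun η => WellFounded.fix_eq _ _ _⟩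
  have hβlt : ∀ η : Ordinal, η < κ.ord →
      Ordinal.blsub η (fun ξ _ => lvl (F ξ).2.2.1) < κ.ord := by
    intro η hη
    apply Ordinal.blsub_lt_ord
    · rw [hreg.cof_eq]
      exact Cardinal.lt_ord.1 hη
    · intro i _
      exact hlt _
  have hspec : ∀ η : Ordinal, η < κ.ord →
      ((F η).1 ≤ p ∧ (F η).2.1 ≤ p ∧ B (F η).1 (F η).2.2.1 ∧ B (F η).2.1 (F η).2.2.2.1 ∧
       lvl (F η).2.2.1 = lvl (F η).2.2.2.1 ∧ ¬ (F η).2.2.1 ≤ (F η).2.2.2.1 ∧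
       ¬ (F η).2.2.2.1 ≤ (F η).2.2.1 ∧ (F η).2.2.2.2 < (F η).2.2.1 ∧
       (F η).2.2.2.2 < (F η).2.2.2.1 ∧
       lvl (F η).2.2.2.2 = Ordinal.blsub η (fun ξ _ => lvl (F ξ).2.2.1)) := by
    intro η hη
    rw [hFeq η]
    exact hf _ (hβlt η hη)
  -- incompatibility of the pairs
  have hinc : ∀ ξ η : Ordinal, ξ < η → η < κ.ord →
      ¬ ∃ z : P × P, z ≤ ((F ξ).1, (F ξ).2.1) ∧ z ≤ ((F η).1, (F η).2.1) := by
    rintro ξ η hξη hη ⟨⟨z₁, z₂⟩, hz1, hz2⟩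
    obtain ⟨ha1, hb1, hBs1, hBt1, hl1, hns1, hnt1, hws1, hwt1, hlw1⟩ := hspec ξ (hξη.trans hη)
    obtain ⟨ha2, hb2, hBs2, hBt2, hl2, hns2, hnt2, hws2, hwt2, hlw2⟩ := hspec η hη
    have hz1a : z₁ ≤ (F ξ).1 := hz1.1
    have hz1b : z₂ ≤ (F ξ).2.1 := hz1.2
    have hz2a : z₁ ≤ (F η).1 := hz2.1
    have hz2b : z₂ ≤ (F η).2.1 := hz2.2
    have hlvlw : lvl (F ξ).2.2.1 < lvl (F η).2.2.2.2 := by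
      rw [hlw2]
      exact Ordinal.lt_blsub _ ξ hξη
    have hlvlw' : lvl (F ξ).2.2.2.1 < lvl (F η).2.2.2.2 := hl1 ▸ hlvlw
    -- s ξ < s η and s ξ < w η
    have hss : (F ξ).2.2.1 < (F η).2.2.1 :=
      lt_of_comp_lvl (hchain z₁ _ _ (hdown _ _ _ hz1a hBs1) (hdown _ _ _ hz2a hBs2))
        (hlvlw.trans (lvl_lt_lvl hws2))
    have hsw : (F ξ).2.2.1 < (F η).2.2.2.2 :=
      lt_of_comp_lvl (preds_comp hss hws2) hlvlw
    -- t ξ < t η and t ξ < w η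
    have htt : (F ξ).2.2.2.1 < (F η).2.2.2.1 :=
      lt_of_comp_lvl (hchain z₂ _ _ (hdown _ _ _ hz1b hBt1) (hdown _ _ _ hz2b hBt2))
        (hlvlw'.trans (lvl_lt_lvl hwt2))
    have htw : (F ξ).2.2.2.1 < (F η).2.2.2.2 :=
      lt_of_comp_lvl (preds_comp htt hwt2) hlvlw'
    have : (F ξ).2.2.1 = (F ξ).2.2.2.1 := eq_of_comp_lvl (preds_comp hsw htw) hl1
    exact hns1 (this ▸ le_refl _)
  -- index by the canonical type of order type κ.ord
  have iwo : IsWellOrder (κ.ord).ToType (· < ·) := isWellOrder_lt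
  set Φ : (κ.ord).ToType → P × P :=
    fun i => ((F (@Ordinal.typein _ (· < ·) iwo i)).1, (F (@Ordinal.typein _ (· < ·) iwo i)).2.1) with hΦ
  have hincΦ : ∀ i j : (κ.ord).ToType,
      @Ordinal.typein _ (· < ·) iwo i < @Ordinal.typein _ (· < ·) iwo j →
      ¬ ∃ z : P × P, z ≤ Φ i ∧ z ≤ Φ j := by
    intro i j hij
    exact hinc _ _ hij (Ordinal.typein_lt_self j)
  have hΦinj : Function.Injective Φ := by
    intro i j he
    by_contra hne
    rcases lt_trichotomy (@Ordinal.typein _ (· < ·) iwo i)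
      (@Ordinal.typein _ (· < ·) iwo j) with h | h | h
    · exact hincΦ i j h ⟨Φ i, le_refl _, he ▸ le_refl _⟩
    · exact hne ((@Ordinal.typein_injective _ _ iwo) h)
    · exact hincΦ j i h ⟨Φ i, he ▸ le_refl _, le_refl _⟩
  have hanti : ∀ x ∈ Set.range Φ, ∀ y ∈ Set.range Φ, x ≠ y →
      ¬ ∃ z : P × P, z ≤ x ∧ z ≤ y := by
    rintro x ⟨i, rfl⟩ y ⟨j, rfl⟩ hne hz
    rcases lt_trichotomy (@Ordinal.typein _ (· < ·) iwo i)
      (@Ordinal.typein _ (· < ·) iwo j) with h | h | h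
    · exact hincΦ i j h hz
    · exact hne (congrArg Φ ((@Ordinal.typein_injective _ _ iwo) h))
    · obtain ⟨z, hz1, hz2⟩ := hz
      exact hincΦ j i h ⟨z, hz2, hz1⟩
  have hlt' := hcc (Set.range Φ) hanti
  rw [Cardinal.mk_range_eq Φ hΦinj, Cardinal.mk_toType, Cardinal.card_ord] at hlt'
  exact absurd hlt' (lt_irrefl κ)
end
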